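/- arXiv:2302.08083 — 2 statements merged into one kernel-verified Lean document; each statement's English description precedes it below -/
import Mathlib

section
/- Let m ≥ 2, A ≥ 1 an integer, and α, β distinct algebraic integers in ℤ[ζ_m] whose representations (as polynomials in ζ_m of degree less than φ(m) with integer coefficients) have all coefficients bounded in absolute value by A. Then |α − β| ≥ 1/(2A·φ(m) + 1)^{φ(m)−1}. -/
/-!
The norm of the nonzero algebraic integer `α - β ∈ ℚ(ζ)` is a nonzero rational integer, so
the product of the moduli of its `φ(m)` conjugates is at least `1`. Each conjugate is
`∑ (aᵢ - bᵢ) ωⁱ` for some root of unity `ω`, hence has modulus at most `2Aφ(m)`; dividing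
out the `φ(m) - 1` conjugates other than `α - β` itself gives the bound.
-/

open scoped IntermediateField
open NumberField Module

namespace NumberField

variable {K : Type*} [Field K] [NumberField K]

theorem one_le_norm_mul_house_pow {α : K} (hα : IsIntegral ℤ α) (hα0 : α ≠ 0)
    (σ : K →+* ℂ) :
    1 ≤ ‖σ α‖ * house α ^ (finrank ℚ K - 1) := by
  refine le_trans ?_ (norm_norm_le_norm_mul_house_pow α σ)
  set x : 𝓞 K := ⟨α, (mem_integralClosure_iff ℤ K).mpr hα⟩
  have hx : x ≠ 0 := fun h => hα0 congr(RingOfIntegers.val $h)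
  rw [show α = x from rfl, ← Algebra.coe_norm_int, Int.norm_cast_rat, Int.norm_eq_abs]
  exact_mod_cast Int.one_le_abs (Algebra.norm_ne_zero_iff.mpr hx)

theorem house_le_one_of_pow_eq_one {ζ : K} {n : ℕ} (hn : n ≠ 0) (h : ζ ^ n = 1) :
    house ζ ≤ 1 := by
  refine (pi_norm_le_iff_of_nonneg zero_le_one).mpr fun σ => ?_
  have hσ : σ ζ ^ n = 1 := by rw [← map_pow, h, map_one]
  exact (Complex.norm_eq_one_of_pow_eq_one hσ hn).le

theorem house_sum_intCast_mul_pow_le {ζ : K} (hζ : house ζ ≤ 1) {n : ℕ} (c : Fin n → ℤ) :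
    house (∑ i, (c i : K) * ζ ^ (i : ℕ)) ≤ ∑ i, |(c i : ℝ)| := by
  refine (house_sum_le_sum_house _ _).trans (Finset.sum_le_sum fun i _ => ?_)
  calc house ((c i : K) * ζ ^ (i : ℕ)) ≤ house (c i : K) * house (ζ ^ (i : ℕ)) :=
        house_mul_le _ _
    _ ≤ |(c i : ℝ)| * 1 := by
        rw [house_intCast, Int.cast_abs]
        gcongr
        exact (house_pow_le ζ i).trans (pow_le_one₀ (house_nonneg ζ) hζ)
    _ = |(c i : ℝ)| := mul_one _

end NumberField

theorem isIntegral_sum_intCast_mul_pow {R : Type*} [CommRing R] {ζ : R} (hζ : IsIntegral ℤ ζ)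
    {n : ℕ} (c : Fin n → ℤ) : IsIntegral ℤ (∑ i, (c i : R) * ζ ^ (i : ℕ)) :=
  IsIntegral.sum _ fun i _ => (isIntegral_algebraMap (x := c i)).mul (hζ.pow _)

namespace IsPrimitiveRoot

variable {L : Type*} [Field L] [CharZero L]

theorem numberField_adjoin_rat {ζ : L} {n : ℕ} (hζ : IsPrimitiveRoot ζ n) (hn : 0 < n) :
    NumberField ℚ⟮ζ⟯ := by
  have : FiniteDimensional ℚ ℚ⟮ζ⟯ :=
    IntermediateField.adjoin.finiteDimensional (hζ.isIntegral hn).tower_top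
  exact {}

theorem finrank_adjoin_rat {ζ : L} {n : ℕ} (hζ : IsPrimitiveRoot ζ n) (hn : 0 < n) :
    finrank ℚ ℚ⟮ζ⟯ = n.totient := by
  rw [IntermediateField.adjoin.finrank (hζ.isIntegral hn).tower_top,
    ← Polynomial.cyclotomic_eq_minpoly_rat hζ hn, Polynomial.natDegree_cyclotomic]

end IsPrimitiveRoot

theorem algebraic_integer_separation_general {m : ℕ} (ζ : ℂ)
    (hζ : IsPrimitiveRoot ζ m) (A : ℤ)
    (a b : Fin (Nat.totient m) → ℤ)
    (ha : ∀ i, |a i| ≤ A) (hb : ∀ i, |b i| ≤ A)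
    (α β : ℂ) (hα : α = ∑ i : Fin (Nat.totient m), (a i : ℂ) * ζ ^ (i : ℕ))
    (hβ : β = ∑ i : Fin (Nat.totient m), (b i : ℂ) * ζ ^ (i : ℕ))
    (hne : α ≠ β) :
    1 / (2 * (A : ℝ) * Nat.totient m + 1) ^ (Nat.totient m - 1) ≤ ‖α - β‖ := by
  have hφ : 0 < m.totient := by
    refine Nat.pos_of_ne_zero fun h => hne ?_
    have : IsEmpty (Fin m.totient) := by rw [h]; infer_instance
    simp [hα, hβ]
  have hm : 0 < m := Nat.totient_pos.mp hφ
  have hA : (0 : ℝ) ≤ A := by exact_mod_cast (abs_nonneg _).trans (ha ⟨0, hφ⟩)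
  have := hζ.numberField_adjoin_rat hm
  set ζ' := IntermediateField.AdjoinSimple.gen ℚ ζ
  have hζ' : IsPrimitiveRoot ζ' m := IsPrimitiveRoot.coe_submonoidClass_iff.mp hζ
  set x : ℚ⟮ζ⟯ := ∑ i, ((a i - b i : ℤ) : ℚ⟮ζ⟯) * ζ' ^ (i : ℕ)
  have hx : algebraMap ℚ⟮ζ⟯ ℂ x = α - β := by
    simp [x, ζ', hα, hβ, ← Finset.sum_sub_distrib, sub_mul]
  have hx0 : x ≠ 0 := fun h => hne (sub_eq_zero.mp (by rw [← hx, h, map_zero]))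
  have hhouse : house x ≤ 2 * A * m.totient := by
    refine (house_sum_intCast_mul_pow_le
      (house_le_one_of_pow_eq_one hm.ne' hζ'.pow_eq_one) _).trans ?_
    calc ∑ i, |((a i - b i : ℤ) : ℝ)| ≤ ∑ _i : Fin m.totient, 2 * (A : ℝ) := by
          refine Finset.sum_le_sum fun i _ => ?_
          exact_mod_cast (abs_sub (a i) (b i)).trans (by linarith [ha i, hb i])
      _ = 2 * A * m.totient := by simp [mul_comm]
  have hliouville := one_le_norm_mul_house_pow
    (isIntegral_sum_intCast_mul_pow (hζ'.isIntegral hm) _) hx0 (algebraMap ℚ⟮ζ⟯ ℂ)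
  rw [hx, hζ.finrank_adjoin_rat hm] at hliouville
  rw [div_le_iff₀ (by positivity)]
  calc 1 ≤ ‖α - β‖ * house x ^ (m.totient - 1) := hliouville
    _ ≤ _ := by gcongr; exacts [house_nonneg x, by linarith]

theorem algebraic_integer_separation {m : ℕ} (hm : 2 ≤ m) (ζ : ℂ)
    (hζ : IsPrimitiveRoot ζ m) (A : ℤ) (hA : 1 ≤ A)
    (a b : Fin (Nat.totient m) → ℤ)
    (ha : ∀ i, |a i| ≤ A) (hb : ∀ i, |b i| ≤ A)
    (α β : ℂ) (hα : α = ∑ i : Fin (Nat.totient m), (a i : ℂ) * ζ ^ (i : ℕ))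
    (hβ : β = ∑ i : Fin (Nat.totient m), (b i : ℂ) * ζ ^ (i : ℕ))
    (hne : α ≠ β) :
    1 / (2 * (A : ℝ) * Nat.totient m + 1) ^ (Nat.totient m - 1) ≤ ‖α - β‖ :=
  algebraic_integer_separation_general ζ hζ A a b ha hb α β hα hβ hne
end

section
/- For X an n×n matrix with i.i.d. standard complex Gaussian entries and z on the unit circle, E[|Per_z(X)|⁴] ≤ E[|Per(X)|⁴], where Per = Per_1 is the ordinary permanent. -/
open scoped BigOperators
open MeasureTheory ProbabilityTheory

def invNum {n : ℕ} (σ : Equiv.Perm (Fin n)) : ℕ :=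
  (Finset.univ.filter (fun p : Fin n × Fin n => p.1 < p.2 ∧ σ p.2 < σ p.1)).card

noncomputable def perz {n : ℕ} (z : ℂ) (X : Matrix (Fin n) (Fin n) ℂ) : ℂ :=
  ∑ σ : Equiv.Perm (Fin n), z ^ invNum σ * ∏ i, X i (σ i)

/-- The standard complex Gaussian distribution: real and imaginary parts are independent
real Gaussians of mean `0` and variance `1/2`. -/
noncomputable def stdComplexGaussian : Measure ℂ :=
  ((gaussianReal 0 (1 / 2)).prod (gaussianReal 0 (1 / 2))).map
    (fun p => (p.1 : ℂ) + p.2 * Complex.I)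

/-!
Write `|w|⁴ = w w w̄ w̄` and expand `|Per_z(X)|⁴` over quadruples `q = (σ, τ, α, β)` of
permutations: it is `∑ q, c_z(q) T_q(X)` with `c_z(q) = z^{ℓσ+ℓτ} z̄^{ℓα+ℓβ}` and `T_q` a monomial
in the entries and their conjugates, each entry occurring with exponents at most `2`.
By independence `E[T_q]` is a product of mixed moments `E[w^a w̄^b]`, `a, b ≤ 2`, of a standard
complex Gaussian. These vanish for `a ≠ b` since the law is invariant under `w ↦ i w`, and are
nonnegative for `a = b`; hence `E[T_q] ≥ 0`. As `|c_z(q)| ≤ 1 = c_1(q)`,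
`E|Per_z|⁴ = Re ∑ c_z(q) E[T_q] ≤ ∑ E[T_q] = E|Per_1|⁴`.
-/

open ComplexConjugate
open scoped ComplexOrder

section Moments

lemma stdComplexGaussian_eq_map_equivRealProdCLM_symm :
    stdComplexGaussian =
      ((gaussianReal 0 (1 / 2)).prod (gaussianReal 0 (1 / 2))).map
        Complex.equivRealProdCLM.symm := by
  simp only [stdComplexGaussian, ← Complex.equivRealProdCLM_symm_apply]

instance : IsGaussian stdComplexGaussian := by
  rw [stdComplexGaussian_eq_map_equivRealProdCLM_symm]
  infer_instance

lemma ProbabilityTheory.IsGaussian.integrable_pow_mul_conj_pow (ν : Measure ℂ) [IsGaussian ν]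
    (a b : ℕ) :
    Integrable (fun w : ℂ => w ^ a * conj w ^ b) ν := by
  refine ((IsGaussian.memLp_id ν (a + b : ℕ) (by simp)).integrable_norm_pow').mono'
    (by fun_prop) (ae_of_all _ fun w => ?_)
  simp [pow_add]

lemma integral_eq_zero_of_map_const_mul_eq {ν : Measure ℂ} {c d : ℂ} {f : ℂ → ℂ}
    (hν : ν.map (c * ·) = ν) (hf : AEStronglyMeasurable f ν) (hfc : ∀ w, f (c * w) = d * f w)
    (hd : d ≠ 1) : ∫ w, f w ∂ν = 0 := by
  have hinv : ∫ w, f w ∂ν = d * ∫ w, f w ∂ν := by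
    conv_lhs => rw [← hν]
    rw [integral_map (measurable_const_mul c).aemeasurable (by rwa [hν])]
    simp_rw [hfc, integral_const_mul]
  have : (1 - d) * ∫ w, f w ∂ν = 0 := by linear_combination hinv
  exact (mul_eq_zero.mp this).resolve_left (sub_ne_zero.mpr (Ne.symm hd))

lemma integral_pow_mul_conj_pow_self_nonneg (ν : Measure ℂ) (a : ℕ) :
    0 ≤ ∫ w, w ^ a * conj w ^ a ∂ν := by
  simp_rw [← mul_pow, Complex.mul_conj, ← Complex.ofReal_pow, integral_complex_ofReal]
  exact Complex.zero_le_real.mpr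
    (integral_nonneg fun w => pow_nonneg (Complex.normSq_nonneg w) a)

lemma integral_pow_mul_conj_pow_nonneg_of_map_I_mul {ν : Measure ℂ}
    (hν : ν.map (Complex.I * ·) = ν) {a b : ℕ} (ha : a ≤ 2) (hb : b ≤ 2) :
    0 ≤ ∫ w, w ^ a * conj w ^ b ∂ν := by
  rcases eq_or_ne a b with rfl | hab
  · exact integral_pow_mul_conj_pow_self_nonneg ν a
  refine (integral_eq_zero_of_map_const_mul_eq hν (by fun_prop)
    (d := Complex.I ^ a * (-Complex.I) ^ b)
    (fun w => by simp only [map_mul, Complex.conj_I]; ring) ?_).ge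
  interval_cases a <;> interval_cases b <;> simp_all [pow_succ, Complex.ext_iff] <;> norm_num

lemma stdComplexGaussian_map_I_mul :
    stdComplexGaussian.map (Complex.I * ·) = stdComplexGaussian := by
  set g := gaussianReal 0 (1 / 2)
  have hrot : (Complex.I * ·) ∘ (fun p : ℝ × ℝ => (p.1 : ℂ) + p.2 * Complex.I) =
      (fun p : ℝ × ℝ => (p.1 : ℂ) + p.2 * Complex.I) ∘ Prod.map Neg.neg id ∘ Prod.swap := by
    funext p
    simp only [Function.comp_apply, Prod.map_fst, Prod.map_snd, Prod.fst_swap, Prod.snd_swap,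
      id, Complex.ofReal_neg]
    linear_combination (p.2 : ℂ) * Complex.I_mul_I
  have hneg : g.map Neg.neg = g := by
    simpa [g] using gaussianReal_map_neg (μ := 0) (v := 1 / 2)
  rw [stdComplexGaussian, Measure.map_map (by fun_prop) (by fun_prop), hrot,
    ← Measure.map_map (by fun_prop) (by fun_prop), ← Measure.map_map (by fun_prop) (by fun_prop),
    Measure.prod_swap, ← Measure.map_prod_map _ _ (by fun_prop) (by fun_prop), hneg,
    Measure.map_id]

end Moments

section Monomials

variable {ι κ : Type*}

def graphIndicator [DecidableEq κ] (σ : ι → κ) (p : ι × κ) : ℕ :=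
  if σ p.1 = p.2 then 1 else 0

lemma graphIndicator_le_one [DecidableEq κ] (σ : ι → κ) (p : ι × κ) :
    graphIndicator σ p ≤ 1 := by
  unfold graphIndicator
  split <;> simp

variable [Fintype ι] [Fintype κ]

lemma prod_apply_eq_prod_pow_graphIndicator {M : Type*} [CommMonoid M] [DecidableEq κ]
    (σ : ι → κ) (x : ι × κ → M) :
    ∏ i, x (i, σ i) = ∏ p, x p ^ graphIndicator σ p := by
  simp [graphIndicator, Fintype.prod_prod_type, pow_ite]

lemma ofReal_norm_sum_pow_four (u : ι → ℂ) :
    ((‖∑ i, u i‖ ^ 4 : ℝ) : ℂ) =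
      ∑ q : ι × ι × ι × ι, u q.1 * u q.2.1 * conj (u q.2.2.1) * conj (u q.2.2.2) := by
  have h4 : ∀ w : ℂ, ((‖w‖ ^ 4 : ℝ) : ℂ) = w * w * conj w * conj w := fun w => by
    rw [show (4 : ℕ) = 2 * 2 from rfl, pow_mul, Complex.sq_norm, Complex.ofReal_pow,
      ← Complex.mul_conj]
    ring
  simp only [h4, map_sum, Fintype.sum_prod_type, ← Finset.mul_sum, ← Finset.sum_mul]

def mixedMonomial (a b : κ → ℕ) (x : κ → ℂ) : ℂ :=
  ∏ k, x k ^ a k * conj (x k) ^ b k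

lemma prod_mul_prod_mul_conj_prod_mul_conj_prod [DecidableEq κ] (σ τ α β : ι → κ)
    (x : ι × κ → ℂ) :
    (∏ i, x (i, σ i)) * (∏ i, x (i, τ i)) * conj (∏ i, x (i, α i)) * conj (∏ i, x (i, β i)) =
      mixedMonomial (graphIndicator σ + graphIndicator τ)
        (graphIndicator α + graphIndicator β) x := by
  simp only [mixedMonomial, map_prod, map_pow, prod_apply_eq_prod_pow_graphIndicator,
    ← Finset.prod_mul_distrib, Pi.add_apply, pow_add]
  exact Finset.prod_congr rfl fun p _ => by ring

lemma integrable_mixedMonomial {ν : Measure ℂ} [SigmaFinite ν] {a b : κ → ℕ}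
    (h : ∀ k, Integrable (fun w : ℂ => w ^ a k * conj w ^ b k) ν) :
    Integrable (mixedMonomial a b) (Measure.pi fun _ => ν) :=
  Integrable.fintype_prod h

lemma integral_mixedMonomial_nonneg {ν : Measure ℂ} [SigmaFinite ν] {a b : κ → ℕ}
    (h : ∀ k, 0 ≤ ∫ w, w ^ a k * conj w ^ b k ∂ν) :
    0 ≤ ∫ x, mixedMonomial a b x ∂(Measure.pi fun _ => ν) := by
  simp only [mixedMonomial]
  rw [integral_fintype_prod_eq_prod (fun k w => w ^ a k * conj w ^ b k)]
  exact Finset.prod_nonneg fun k _ => h k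

end Monomials

lemma re_sum_mul_le_re_sum {ι : Type*} (s : Finset ι) {c m : ι → ℂ}
    (hc : ∀ i ∈ s, ‖c i‖ ≤ 1) (hm : ∀ i ∈ s, 0 ≤ m i) :
    (∑ i ∈ s, c i * m i).re ≤ (∑ i ∈ s, m i).re := by
  simp only [Complex.re_sum]
  refine Finset.sum_le_sum fun i hi => ?_
  obtain ⟨hre, him⟩ := Complex.nonneg_iff.mp (hm i hi)
  rw [Complex.mul_re, ← him, mul_zero, sub_zero]
  exact mul_le_of_le_one_left hre ((Complex.re_le_norm _).trans (hc i hi))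

section Perz

variable {n : ℕ}

def perzCoeff (z : ℂ)
    (q : Equiv.Perm (Fin n) × Equiv.Perm (Fin n) × Equiv.Perm (Fin n) × Equiv.Perm (Fin n)) : ℂ :=
  z ^ invNum q.1 * z ^ invNum q.2.1 * conj z ^ invNum q.2.2.1 * conj z ^ invNum q.2.2.2

def perzMonomial
    (q : Equiv.Perm (Fin n) × Equiv.Perm (Fin n) × Equiv.Perm (Fin n) × Equiv.Perm (Fin n)) :
    (Fin n × Fin n → ℂ) → ℂ :=
  mixedMonomial (graphIndicator q.1 + graphIndicator q.2.1)
    (graphIndicator q.2.2.1 + graphIndicator q.2.2.2)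

lemma norm_perzCoeff_le_one {z : ℂ} (hz : ‖z‖ ≤ 1) (q) : ‖perzCoeff (n := n) z q‖ ≤ 1 := by
  simp only [perzCoeff, norm_mul, norm_pow, Complex.norm_conj]
  bound

lemma perzCoeff_one (q) : perzCoeff (n := n) 1 q = 1 := by
  simp [perzCoeff]

lemma ofReal_norm_perz_pow_four (z : ℂ) (x : Fin n × Fin n → ℂ) :
    ((‖perz z (Matrix.of fun i j => x (i, j))‖ ^ 4 : ℝ) : ℂ) =
      ∑ q, perzCoeff z q * perzMonomial q x := by
  rw [perz.eq_1, ofReal_norm_sum_pow_four]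
  refine Finset.sum_congr rfl fun q _ => ?_
  rw [perzMonomial, ← prod_mul_prod_mul_conj_prod_mul_conj_prod, perzCoeff]
  simp only [map_mul, map_pow, Matrix.of_apply]
  ring

lemma integral_norm_perz_pow_four_eq_sum {P : Measure (Fin n × Fin n → ℂ)}
    (hP : ∀ q, Integrable (perzMonomial q) P) (z : ℂ) :
    ((∫ x, ‖perz z (Matrix.of fun i j => x (i, j))‖ ^ 4 ∂P : ℝ) : ℂ) =
      ∑ q, perzCoeff z q * ∫ x, perzMonomial q x ∂P := by
  rw [← integral_complex_ofReal]
  simp_rw [ofReal_norm_perz_pow_four]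
  rw [integral_finsetSum _ fun q _ => (hP q).const_mul _]
  simp_rw [integral_const_mul]

theorem integral_norm_perz_pow_four_le {ν : Measure ℂ} [SigmaFinite ν]
    (hint : ∀ a b, a ≤ 2 → b ≤ 2 → Integrable (fun w : ℂ => w ^ a * conj w ^ b) ν)
    (hnonneg : ∀ a b, a ≤ 2 → b ≤ 2 → 0 ≤ ∫ w, w ^ a * conj w ^ b ∂ν) {z : ℂ} (hz : ‖z‖ ≤ 1) :
    ∫ x, ‖perz z (Matrix.of fun i j => x (i, j))‖ ^ 4
        ∂(Measure.pi fun _ : Fin n × Fin n => ν) ≤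
      ∫ x, ‖perz 1 (Matrix.of fun i j => x (i, j))‖ ^ 4
        ∂(Measure.pi fun _ : Fin n × Fin n => ν) := by
  have hexp : ∀ (σ τ : Equiv.Perm (Fin n)) p, graphIndicator σ p + graphIndicator τ p ≤ 2 :=
    fun σ τ p => add_le_add (graphIndicator_le_one σ p) (graphIndicator_le_one τ p)
  have hP : ∀ q, Integrable (perzMonomial q) (Measure.pi fun _ : Fin n × Fin n => ν) :=
    fun q => integrable_mixedMonomial fun p => hint _ _ (hexp _ _ p) (hexp _ _ p)
  have hm : ∀ q, 0 ≤ ∫ x, perzMonomial q x ∂(Measure.pi fun _ : Fin n × Fin n => ν) :=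
    fun q => integral_mixedMonomial_nonneg fun p => hnonneg _ _ (hexp _ _ p) (hexp _ _ p)
  have hone := integral_norm_perz_pow_four_eq_sum hP 1
  simp only [perzCoeff_one, one_mul] at hone
  calc ∫ x, ‖perz z (Matrix.of fun i j => x (i, j))‖ ^ 4 ∂(Measure.pi fun _ => ν)
      = (∑ q, perzCoeff z q * ∫ x, perzMonomial q x ∂(Measure.pi fun _ => ν)).re := by
        rw [← integral_norm_perz_pow_four_eq_sum hP, Complex.ofReal_re]
    _ ≤ (∑ q, ∫ x, perzMonomial q x ∂(Measure.pi fun _ => ν)).re :=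
        re_sum_mul_le_re_sum _ (fun q _ => norm_perzCoeff_le_one hz q) fun q _ => hm q
    _ = ∫ x, ‖perz 1 (Matrix.of fun i j => x (i, j))‖ ^ 4 ∂(Measure.pi fun _ => ν) := by
        rw [← hone, Complex.ofReal_re]

end Perz

theorem perz_fourth_moment_le {n : ℕ} {Ω : Type*} [MeasurableSpace Ω]
    (μ : Measure Ω) [IsProbabilityMeasure μ]
    (X : Ω → Matrix (Fin n) (Fin n) ℂ)
    (hmeas : ∀ i j, Measurable (fun ω => X ω i j))
    (hindep : iIndepFun (fun (p : Fin n × Fin n) ω => X ω p.1 p.2) μ)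
    (hdist : ∀ i j, μ.map (fun ω => X ω i j) = stdComplexGaussian)
    (z : ℂ) (hz : ‖z‖ = 1) :
    ∫ ω, ‖perz z (X ω)‖ ^ 4 ∂μ ≤
      ∫ ω, ‖perz 1 (X ω)‖ ^ 4 ∂μ := by
  have hentries : AEMeasurable (fun ω (p : Fin n × Fin n) => X ω p.1 p.2) μ :=
    (measurable_pi_lambda _ fun p : Fin n × Fin n => hmeas p.1 p.2).aemeasurable
  have hlaw : μ.map (fun ω (p : Fin n × Fin n) => X ω p.1 p.2) =
      Measure.pi fun _ => stdComplexGaussian := by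
    rw [hindep.map_fun_eq_pi_map fun p : Fin n × Fin n => (hmeas p.1 p.2).aemeasurable]
    exact congrArg Measure.pi (funext fun p => hdist p.1 p.2)
  have hchange : ∀ w : ℂ, ∫ ω, ‖perz w (X ω)‖ ^ 4 ∂μ =
      ∫ x, ‖perz w (Matrix.of fun i j => x (i, j))‖ ^ 4
        ∂(Measure.pi fun _ => stdComplexGaussian) :=
    fun w => by
      have hcont : Continuous fun x : Fin n × Fin n → ℂ =>
          ‖perz w (Matrix.of fun i j => x (i, j))‖ ^ 4 := by
        simp only [perz, Matrix.of_apply]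
        fun_prop
      rw [← hlaw, integral_map hentries hcont.aestronglyMeasurable]
      rfl
  rw [hchange, hchange]
  exact integral_norm_perz_pow_four_le
    (fun a b _ _ => IsGaussian.integrable_pow_mul_conj_pow _ a b)
    (fun _ _ => integral_pow_mul_conj_pow_nonneg_of_map_I_mul stdComplexGaussian_map_I_mul)
    hz.le
end
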